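/- Let ε > 0, k ∈ ℝ with k ≠ 0, and let λ ∈ ℂ be any root of P_k(λ) = −λ³ − (1/ε)λ² − 3k²λ − (5/3)k²/ε. Set a = λ/k and b = (3/(4εk))(1 + ελ). Then the vector (−1 − ab, i·b, 1) ∈ ℂ³ is an eigenvector of the matrix L_k = [[0, −(5/3)ik, 0], [−ik, 0, −ik], [0, −(4/3)ik, −1/ε]] with eigenvalue λ, i.e., L_k (−1 − ab, ib, 1)ᵀ = λ (−1 − ab, ib, 1)ᵀ. -/

import Mathlib

/-- The Fourier-space generator of the linear three-component Grad system. -/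
noncomputable def gradL (ε k : ℝ) : Matrix (Fin 3) (Fin 3) ℂ :=
  !![0, -(5/3) * Complex.I * k, 0;
     -Complex.I * k, 0, -Complex.I * k;
     0, -(4/3) * Complex.I * k, -1/ε]

/-- The characteristic polynomial `P_k(λ)` of the Grad generator. -/
noncomputable def gradP (ε k : ℝ) (l : ℂ) : ℂ :=
  -l^3 - (1/ε) * l^2 - 3 * k^2 * l - (5/3) * k^2 / ε

theorem grad_eigenvector (ε : ℝ) (hε : 0 < ε) (k : ℝ) (hk : k ≠ 0)
    (l : ℂ) (hl : gradP ε k l = 0)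
    (a b : ℂ) (ha : a = l / k) (hb : b = (3 / (4 * ε * k)) * (1 + ε * l)) :
    (gradL ε k).mulVec ![-1 - a * b, Complex.I * b, 1] =
      l • ![-1 - a * b, Complex.I * b, 1] := by
  have hε' : (ε : ℂ) ≠ 0 := by exact_mod_cast hε.ne'
  have hk' : (k : ℂ) ≠ 0 := by exact_mod_cast hk
  have hI2 := Complex.I_sq
  have hP : -l^3 - (1/ε) * l^2 - 3 * k^2 * l - (5/3) * k^2 / ε = 0 := hl
  field_simp at hP
  subst ha hb
  funext i
  fin_cases i
  · simp [gradL, Matrix.mulVec, dotProduct, Fin.sum_univ_three]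
    field_simp
    ring_nf
    linear_combination (-5*(k:ℂ)^2 - 5*(k:ℂ)^2*ε*l) * hI2 + (-1) * hP
  · simp [gradL, Matrix.mulVec, dotProduct, Fin.sum_univ_three]
    field_simp
    ring
  · simp [gradL, Matrix.mulVec, dotProduct, Fin.sum_univ_three]
    ring_nf
    simp only [hI2]
    field_simp
    ring
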